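/- Let V₁,…,V₅ : I → E⁵ be a Frenet frame with positive smooth curvatures k₁,k₂,k₃,k₄ satisfying the Frenet equations on an open interval I. Suppose there exists a constant unit vector U ∈ E⁵ such that s ↦ ⟪V₅(s), U⟫ is a nonzero constant on I (i.e., the curve is a V₅ slant helix), and suppose the ratio k₄/k₃ is constant on I. Then the ratio k₂/k₁ is constant on I (hence the curve is also a V₃ slant helix). -/

import Mathlib

/-!
The coordinates `fᵢ = ⟪Vᵢ, U⟫` of the helix axis satisfy the Frenet equations read backwards:
`f₅' = -k₄ f₄`, `f₄' = -k₃ f₃ + k₄ f₅`, `f₃' = -k₂ f₂ + k₃ f₄`, `f₂' = -k₁ f₁ + k₂ f₃`, `f₁' = k₁ f₂`.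
Since `f₅ = c` is constant, successively `f₄ = 0`, `f₃ = (k₄/k₃) c = m c`, `f₂ = 0`, so `f₁` is a
constant `d`, and `k₁ d = k₂ m c` gives `k₂/k₁ = d / (m c)`.
-/

open scoped RealInnerProductSpace ContDiff

section InnerWithConstant

variable {E : Type*} [NormedAddCommGroup E] [InnerProductSpace ℝ E]

theorem HasDerivAt.inner_const {V : ℝ → E} {D : E} {s : ℝ} (hV : HasDerivAt V D s) (U : E) :
    HasDerivAt (fun t => ⟪V t, U⟫) ⟪D, U⟫ s := by
  simpa using hV.inner ℝ (hasDerivAt_const s U)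

theorem inner_deriv_eq_zero_of_inner_eq_const {S : Set ℝ} (hS : IsOpen S) {V : ℝ → E} {U D : E}
    {c s : ℝ} (hs : s ∈ S) (hc : ∀ t ∈ S, ⟪V t, U⟫ = c) (hV : HasDerivAt V D s) :
    ⟪D, U⟫ = 0 :=
  (hV.inner_const U).unique <| (hasDerivAt_const s c).congr_of_eventuallyEq <|
    Filter.eventually_of_mem (hS.mem_nhds hs) hc

theorem exists_inner_eq_const_of_inner_deriv_eq_zero {S : Set ℝ} (hS : IsOpen S)
    (hS' : IsPreconnected S) {V D : ℝ → E} {U : E} (hV : ∀ s ∈ S, HasDerivAt V (D s) s)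
    (hD : ∀ s ∈ S, ⟪D s, U⟫ = 0) : ∃ c, ∀ s ∈ S, ⟪V s, U⟫ = c :=
  hS.exists_is_const_of_deriv_eq_zero hS'
    (fun s hs => ((hV s hs).inner_const U).differentiableAt.differentiableWithinAt)
    (fun s hs => ((hV s hs).inner_const U).deriv.trans (hD s hs))

end InnerWithConstant

theorem stmt_11_general
    (a b : ℝ)
    (V₁ V₂ V₃ V₄ V₅ : ℝ → EuclideanSpace ℝ (Fin 5))
    (k₁ k₂ k₃ k₄ : ℝ → ℝ)
    (hk₁ : ∀ s ∈ Set.Ioo a b, 0 < k₁ s)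
    (hk₂ : ∀ s ∈ Set.Ioo a b, 0 < k₂ s)
    (hk₃ : ∀ s ∈ Set.Ioo a b, 0 < k₃ s)
    (hk₄ : ∀ s ∈ Set.Ioo a b, 0 < k₄ s)
    (hF₁ : ∀ s ∈ Set.Ioo a b, HasDerivAt V₁ (k₁ s • V₂ s) s)
    (hF₂ : ∀ s ∈ Set.Ioo a b, HasDerivAt V₂ (-(k₁ s) • V₁ s + k₂ s • V₃ s) s)
    (hF₃ : ∀ s ∈ Set.Ioo a b, HasDerivAt V₃ (-(k₂ s) • V₂ s + k₃ s • V₄ s) s)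
    (hF₄ : ∀ s ∈ Set.Ioo a b, HasDerivAt V₄ (-(k₃ s) • V₃ s + k₄ s • V₅ s) s)
    (hF₅ : ∀ s ∈ Set.Ioo a b, HasDerivAt V₅ (-(k₄ s) • V₄ s) s)
    (hhelix : ∃ U : EuclideanSpace ℝ (Fin 5), ‖U‖ = 1 ∧
        ∃ c : ℝ, c ≠ 0 ∧ ∀ s ∈ Set.Ioo a b, ⟪V₅ s, U⟫ = c)
    (hratio : ∃ c : ℝ, ∀ s ∈ Set.Ioo a b, k₄ s / k₃ s = c) :
    ∃ c : ℝ, ∀ s ∈ Set.Ioo a b, k₂ s / k₁ s = c := by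
  obtain ⟨U, -, c, hc, h₅⟩ := hhelix
  obtain ⟨m, hm⟩ := hratio
  have hI : IsOpen (Set.Ioo a b) := isOpen_Ioo
  have h₄ : ∀ s ∈ Set.Ioo a b, ⟪V₄ s, U⟫ = 0 := fun s hs => by
    have h := inner_deriv_eq_zero_of_inner_eq_const hI hs h₅ (hF₅ s hs)
    simpa [real_inner_smul_left, (hk₄ s hs).ne'] using h
  have h₃ : ∀ s ∈ Set.Ioo a b, ⟪V₃ s, U⟫ = m * c := fun s hs => by
    have h := inner_deriv_eq_zero_of_inner_eq_const hI hs h₄ (hF₄ s hs)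
    rw [inner_add_left, real_inner_smul_left, real_inner_smul_left, h₅ s hs] at h
    rw [← hm s hs]
    field_simp [(hk₃ s hs).ne']
    linarith
  have h₂ : ∀ s ∈ Set.Ioo a b, ⟪V₂ s, U⟫ = 0 := fun s hs => by
    have h := inner_deriv_eq_zero_of_inner_eq_const hI hs h₃ (hF₃ s hs)
    simpa [inner_add_left, real_inner_smul_left, h₄ s hs, (hk₂ s hs).ne'] using h
  have h₁ : ∀ s ∈ Set.Ioo a b, k₁ s * ⟪V₁ s, U⟫ = k₂ s * (m * c) := fun s hs => by
    have h := inner_deriv_eq_zero_of_inner_eq_const hI hs h₂ (hF₂ s hs)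
    rw [inner_add_left, real_inner_smul_left, real_inner_smul_left, h₃ s hs] at h
    linarith
  obtain ⟨d, hd⟩ := exists_inner_eq_const_of_inner_deriv_eq_zero hI isPreconnected_Ioo hF₁
    fun s hs => by rw [real_inner_smul_left, h₂ s hs, mul_zero]
  refine ⟨d / (m * c), fun s hs => ?_⟩
  have hm₀ : m ≠ 0 := hm s hs ▸ (div_pos (hk₄ s hs) (hk₃ s hs)).ne'
  rw [div_eq_div_iff (hk₁ s hs).ne' (mul_ne_zero hm₀ hc), ← hd s hs, ← h₁ s hs]
  ring

theorem stmt_11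
    (a b : ℝ) (hab : a < b)
    (V₁ V₂ V₃ V₄ V₅ : ℝ → EuclideanSpace ℝ (Fin 5))
    (k₁ k₂ k₃ k₄ : ℝ → ℝ)
    (hV₁s : ContDiffOn ℝ ∞ V₁ (Set.Ioo a b))
    (hV₂s : ContDiffOn ℝ ∞ V₂ (Set.Ioo a b))
    (hV₃s : ContDiffOn ℝ ∞ V₃ (Set.Ioo a b))
    (hV₄s : ContDiffOn ℝ ∞ V₄ (Set.Ioo a b))
    (hV₅s : ContDiffOn ℝ ∞ V₅ (Set.Ioo a b))
    (hk₁s : ContDiffOn ℝ ∞ k₁ (Set.Ioo a b))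
    (hk₂s : ContDiffOn ℝ ∞ k₂ (Set.Ioo a b))
    (hk₃s : ContDiffOn ℝ ∞ k₃ (Set.Ioo a b))
    (hk₄s : ContDiffOn ℝ ∞ k₄ (Set.Ioo a b))
    (hk₁ : ∀ s ∈ Set.Ioo a b, 0 < k₁ s)
    (hk₂ : ∀ s ∈ Set.Ioo a b, 0 < k₂ s)
    (hk₃ : ∀ s ∈ Set.Ioo a b, 0 < k₃ s)
    (hk₄ : ∀ s ∈ Set.Ioo a b, 0 < k₄ s)
    (horth : ∀ s ∈ Set.Ioo a b, Orthonormal ℝ ![V₁ s, V₂ s, V₃ s, V₄ s, V₅ s])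
    (hF₁ : ∀ s ∈ Set.Ioo a b, HasDerivAt V₁ (k₁ s • V₂ s) s)
    (hF₂ : ∀ s ∈ Set.Ioo a b, HasDerivAt V₂ (-(k₁ s) • V₁ s + k₂ s • V₃ s) s)
    (hF₃ : ∀ s ∈ Set.Ioo a b, HasDerivAt V₃ (-(k₂ s) • V₂ s + k₃ s • V₄ s) s)
    (hF₄ : ∀ s ∈ Set.Ioo a b, HasDerivAt V₄ (-(k₃ s) • V₃ s + k₄ s • V₅ s) s)
    (hF₅ : ∀ s ∈ Set.Ioo a b, HasDerivAt V₅ (-(k₄ s) • V₄ s) s)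
    (hhelix : ∃ U : EuclideanSpace ℝ (Fin 5), ‖U‖ = 1 ∧
        ∃ c : ℝ, c ≠ 0 ∧ ∀ s ∈ Set.Ioo a b, ⟪V₅ s, U⟫ = c)
    (hratio : ∃ c : ℝ, ∀ s ∈ Set.Ioo a b, k₄ s / k₃ s = c) :
    ∃ c : ℝ, ∀ s ∈ Set.Ioo a b, k₂ s / k₁ s = c :=
  stmt_11_general a b V₁ V₂ V₃ V₄ V₅ k₁ k₂ k₃ k₄ hk₁ hk₂ hk₃ hk₄ hF₁ hF₂ hF₃ hF₄ hF₅ hhelix hratio
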